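/- arXiv:1911.07641 — 4 statements merged into one kernel-verified Lean document; each statement's English description precedes it below -/
import Mathlib

section
/- For every finite group G, o(G) ≤ k(G), where k(G) is the number of conjugacy classes of G. -/
open scoped Classical


lemma orderOf_le_card_commute {G : Type*} [Group G] [Fintype G] (g : G) :
    orderOf g ≤ Fintype.card {h : G // Commute g h} := by
  rw [← Fintype.card_zpowers]
  apply Fintype.card_le_of_injective
    (fun x => ⟨x.1, by
      obtain ⟨k, hk⟩ := Subgroup.mem_zpowers_iff.mp x.2
      exact hk ▸ (Commute.refl g).zpow_right k⟩)
  rintro ⟨a, ha⟩ ⟨b, hb⟩ hab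
  simpa using hab

/-- For every finite group `G`, the average order is at most the number of
conjugacy classes: `o(G) ≤ k(G)`. -/
theorem avg_order_le_card_conjClasses
    (G : Type*) [Group G] [Fintype G] :
    (∑ g : G, (orderOf g : ℝ)) / (Fintype.card G : ℝ) ≤ (Nat.card (ConjClasses G) : ℝ) := by
  rw [div_le_iff₀ (by exact_mod_cast Fintype.card_pos)]
  have key : (∑ g : G, orderOf g) ≤ Nat.card (ConjClasses G) * Nat.card G := by
    calc ∑ g : G, orderOf g
        ≤ ∑ g : G, Fintype.card {h : G // Commute g h} :=
          Finset.sum_le_sum fun g _ => orderOf_le_card_commute g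
      _ = Fintype.card {p : G × G // Commute p.1 p.2} := by
          rw [Fintype.card_congr (Equiv.subtypeProdEquivSigmaSubtype fun a b : G => Commute a b),
            Fintype.card_sigma]
      _ = Nat.card {p : G × G // Commute p.1 p.2} := Nat.card_eq_fintype_card.symm
      _ = Nat.card (ConjClasses G) * Nat.card G := card_comm_eq_card_conjClasses_mul_card G
  have := Nat.card_eq_fintype_card (α := G)
  push_cast [← this]
  exact_mod_cast key
end

section
/- Let G be a finite group, H a subgroup of G contained in the center Z(G), and a an element of G. Then ψ(aH) ≥ ψ(H), i.e., the sum of the orders of the elements of the coset aH is at least the sum of the orders of the elements of H. -/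
open scoped Classical

section Aux

variable {G : Type*} [Group G] [Fintype G]

private lemma sum_image_mul (s : Finset G) (a : G) (F : G → ℕ) :
    ∑ h ∈ s, F (a * h) = ∑ y ∈ s.image (fun h => a * h), F y :=
  (Finset.sum_image fun _ _ _ _ h => mul_left_cancel h).symm

private lemma image_mul_of_mem (H : Subgroup G) {a : G} (ha : a ∈ H) :
    (H : Set G).toFinset.image (fun h => a * h) = (H : Set G).toFinset := by
  ext x
  simp only [Finset.mem_image, Set.mem_toFinset, SetLike.mem_coe]
  constructor
  · rintro ⟨h, hh, rfl⟩; exact H.mul_mem ha hh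
  · intro hx; exact ⟨a⁻¹ * x, H.mul_mem (H.inv_mem ha) hx, by group⟩

private lemma sum_coset_of_mem (H : Subgroup G) {a : G} (ha : a ∈ H) (F : G → ℕ) :
    ∑ h ∈ (H : Set G).toFinset, F (a * h) = ∑ h ∈ (H : Set G).toFinset, F h := by
  rw [sum_image_mul, image_mul_of_mem H ha]

private lemma order_eq_mul_order_pow {x : G} {d : ℕ} (hdvd : d ∣ orderOf x) :
    orderOf x = d * orderOf (x ^ d) := by
  rw [orderOf_pow x, Nat.gcd_eq_right hdvd, Nat.mul_div_cancel' hdvd]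

private lemma order_le_mul_order_pow (x : G) {d : ℕ} (hd : 0 < d) :
    orderOf x ≤ d * orderOf (x ^ d) := by
  refine Nat.le_of_dvd (Nat.mul_pos hd (orderOf_pos _)) (orderOf_dvd_of_pow_eq_one ?_)
  rw [pow_mul, pow_orderOf_eq_one]

private lemma key (n : ℕ) : ∀ (H : Subgroup G), H ≤ Subgroup.center G → ∀ a : G,
    (H : Set G).toFinset.card ≤ n →
    ∑ h ∈ (H : Set G).toFinset, orderOf h ≤
      ∑ h ∈ (H : Set G).toFinset, orderOf (a * h) := by
  induction n using Nat.strong_induction_on with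
  | _ n IH =>
    intro H hH a hcard
    by_cases haH : a ∈ H
    · rw [sum_coset_of_mem H haH]
    · set Hfin := (H : Set G).toFinset with hHfin
      have hcomm : ∀ h ∈ H, ∀ g : G, Commute g h := fun h hh g =>
        (Subgroup.mem_center_iff.mp (hH hh) g)
      have hex : ∃ k, 0 < k ∧ a ^ k ∈ H :=
        ⟨Fintype.card G, Fintype.card_pos, by rw [pow_card_eq_one]; exact H.one_mem⟩
      set d := Nat.find hex with hd_def
      obtain ⟨hdpos, hadH⟩ : 0 < d ∧ a ^ d ∈ H := Nat.find_spec hex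
      have hdvd : ∀ m : ℕ, a ^ m ∈ H → d ∣ m := by
        intro m hm
        have hr : a ^ (m % d) ∈ H := by
          have hEq : a ^ (m % d) = (a ^ (d * (m / d)))⁻¹ * a ^ m := by
            rw [eq_inv_mul_iff_mul_eq, ← pow_add]
            exact congrArg (a ^ ·) (Nat.div_add_mod m d)
          rw [hEq]
          exact H.mul_mem (H.inv_mem (by rw [pow_mul]; exact H.pow_mem hadH _)) hm
        by_contra hnd
        have hpos : 0 < m % d := Nat.pos_of_ne_zero fun h => hnd (Nat.dvd_of_mod_eq_zero h)
        exact Nat.find_min hex (Nat.mod_lt m hdpos) ⟨hpos, hr⟩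
      have hmulpow : ∀ h ∈ H, ∀ k : ℕ, (a * h) ^ k = a ^ k * h ^ k := fun h hh k =>
        (hcomm h hh a).mul_pow k
      have stepA : ∀ h ∈ Hfin, orderOf (a * h) = d * orderOf (a ^ d * h ^ d) := by
        intro h hh
        rw [hHfin, Set.mem_toFinset, SetLike.mem_coe] at hh
        have hdd : d ∣ orderOf (a * h) := by
          apply hdvd
          have h1 : a ^ orderOf (a * h) * h ^ orderOf (a * h) = 1 := by
            rw [← hmulpow h hh]; exact pow_orderOf_eq_one _
          have h2 : a ^ orderOf (a * h) = (h ^ orderOf (a * h))⁻¹ :=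
            eq_inv_of_mul_eq_one_left h1
          rw [h2]
          exact H.inv_mem (H.pow_mem hh _)
        rw [order_eq_mul_order_pow hdd, hmulpow h hh]
      -- the subgroup of d-th powers of H
      set b := a ^ d with hb
      let K' : Subgroup G :=
        { carrier := (fun h : G => h ^ d) '' (H : Set G)
          one_mem' := ⟨1, H.one_mem, one_pow d⟩
          mul_mem' := by
            rintro x y ⟨g, hg, rfl⟩ ⟨h, hh, rfl⟩
            refine ⟨g * h, H.mul_mem hg hh, ?_⟩
            show (g * h) ^ d = g ^ d * h ^ d
            exact (hcomm h hh g).mul_pow d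
          inv_mem' := by
            rintro x ⟨g, hg, rfl⟩
            refine ⟨g⁻¹, H.inv_mem hg, ?_⟩
            show g⁻¹ ^ d = (g ^ d)⁻¹
            exact inv_pow g d }
      have hK'mem : ∀ x : G, x ∈ K' ↔ ∃ g ∈ H, g ^ d = x := by
        intro x
        constructor
        · rintro ⟨g, hg, rfl⟩; exact ⟨g, hg, rfl⟩
        · rintro ⟨g, hg, rfl⟩; exact ⟨g, hg, rfl⟩
      have hK'H : K' ≤ H := by
        intro x hx
        obtain ⟨g, hg, rfl⟩ := (hK'mem x).mp hx
        exact H.pow_mem hg d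
      set K'fin := (K' : Set G).toFinset with hK'fin
      have himg : Hfin.image (fun h => h ^ d) = K'fin := by
        ext x
        simp only [Finset.mem_image, hHfin, hK'fin, Set.mem_toFinset, SetLike.mem_coe]
        rw [hK'mem]
      have hsum_comp : ∀ F : G → ℕ, ∑ h ∈ Hfin, F (h ^ d)
          = ∑ z ∈ K'fin, (Hfin.filter fun h => h ^ d = z).card * F z := by
        intro F
        rw [← himg, Finset.sum_comp]
        refine Finset.sum_congr rfl fun z _ => ?_
        rw [smul_eq_mul]
      have hfib : ∀ z ∈ K'fin, (Hfin.filter fun h => h ^ d = z).card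
          = (Hfin.filter fun h => h ^ d = 1).card := by
        intro z hz
        rw [hK'fin, Set.mem_toFinset, SetLike.mem_coe, hK'mem] at hz
        obtain ⟨g, hg, rfl⟩ := hz
        apply Finset.card_bij (fun h _ => h * g⁻¹)
        · intro h hh
          simp only [Finset.mem_filter, hHfin, Set.mem_toFinset, SetLike.mem_coe] at hh ⊢
          refine ⟨H.mul_mem hh.1 (H.inv_mem hg), ?_⟩
          rw [(hcomm g⁻¹ (H.inv_mem hg) h).mul_pow, inv_pow, hh.2, mul_inv_cancel]
        · intro h1 hh1 h2 hh2 hEq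
          exact mul_right_cancel hEq
        · intro k hk
          simp only [Finset.mem_filter, hHfin, Set.mem_toFinset, SetLike.mem_coe] at hk
          refine ⟨k * g, ?_, by group⟩
          simp only [Finset.mem_filter, hHfin, Set.mem_toFinset, SetLike.mem_coe]
          refine ⟨H.mul_mem hk.1 hg, ?_⟩
          rw [(hcomm g hg k).mul_pow, hk.2, one_mul]
      have hmain : ∑ z ∈ K'fin, orderOf z ≤ ∑ z ∈ K'fin, orderOf (b * z) := by
        by_cases hbK : b ∈ K'
        · exact le_of_eq (sum_coset_of_mem K' hbK _).symm
        · have hsub : K'fin ⊆ Hfin := by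
            intro x hx
            rw [hK'fin, Set.mem_toFinset, SetLike.mem_coe] at hx
            rw [hHfin, Set.mem_toFinset, SetLike.mem_coe]
            exact hK'H hx
          have hlt : K'fin.card < Hfin.card := by
            apply Finset.card_lt_card
            rw [Finset.ssubset_iff_of_subset hsub]
            refine ⟨b, ?_, ?_⟩
            · rw [hHfin, Set.mem_toFinset, SetLike.mem_coe]; exact hadH
            · rw [hK'fin, Set.mem_toFinset, SetLike.mem_coe]; exact hbK
          exact IH K'fin.card (lt_of_lt_of_le hlt hcard) K' (hK'H.trans hH) b le_rfl
      set c := (Hfin.filter fun h => h ^ d = 1).card with hc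
      have hcollapse : ∀ F : G → ℕ,
          ∑ z ∈ K'fin, (Hfin.filter fun h => h ^ d = z).card * F z = c * ∑ z ∈ K'fin, F z := by
        intro F
        rw [Finset.mul_sum]
        exact Finset.sum_congr rfl fun z hz => by rw [hfib z hz]
      calc ∑ h ∈ Hfin, orderOf h
          ≤ ∑ h ∈ Hfin, d * orderOf (h ^ d) :=
            Finset.sum_le_sum fun h _ => order_le_mul_order_pow h hdpos
        _ = d * ∑ h ∈ Hfin, orderOf (h ^ d) := (Finset.mul_sum _ _ _).symm
        _ = d * (c * ∑ z ∈ K'fin, orderOf z) :=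
            congrArg (d * ·) ((hsum_comp orderOf).trans (hcollapse orderOf))
        _ ≤ d * (c * ∑ z ∈ K'fin, orderOf (b * z)) :=
            Nat.mul_le_mul_left d (Nat.mul_le_mul_left c hmain)
        _ = d * ∑ h ∈ Hfin, orderOf (b * h ^ d) :=
            congrArg (d * ·)
              (((hcollapse fun z => orderOf (b * z)).symm).trans
                (hsum_comp fun z => orderOf (b * z)).symm)
        _ = ∑ h ∈ Hfin, d * orderOf (a ^ d * h ^ d) := Finset.mul_sum _ _ _
        _ = ∑ h ∈ Hfin, orderOf (a * h) := (Finset.sum_congr rfl stepA).symm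

end Aux

open scoped Pointwise in
open scoped Classical in
/-- **Lemma.** Let `G` be a finite group, `H` a subgroup of `G` contained in the
center `Z(G)`, and `a ∈ G`. Then `ψ(aH) ≥ ψ(H)`: the sum of the orders of the
elements of the coset `aH` is at least the sum of the orders of the elements of `H`. -/
theorem psi_coset_ge_psi_central_subgroup
    (G : Type*) [Group G] [Fintype G] (H : Subgroup G)
    (hH : H ≤ Subgroup.center G) (a : G) :
    ∑ y ∈ (a • (H : Set G)).toFinset, orderOf y ≥
      ∑ y ∈ (H : Set G).toFinset, orderOf y := by
  have h1 : (a • (H : Set G)).toFinset = (H : Set G).toFinset.image (fun h => a * h) := by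
    ext y
    simp only [Set.mem_toFinset, Finset.mem_image, Set.mem_smul_set, smul_eq_mul,
      SetLike.mem_coe]
  rw [ge_iff_le, h1, ← sum_image_mul]
  exact key (H : Set G).toFinset.card H hH a le_rfl
end

section
/- Let G be a finite group and N a subgroup of G. Then o(N ∩ Z(G)) ≤ o(G), where Z(G) is the center of G. -/
/-!
For central `H` the group generated by `g` and `H` is abelian, so it suffices to show that in a
finite abelian group a subgroup `H` has the least sum of element orders among its cosets:
averaging `∑_{x ∈ H} o(x) ≤ ∑_{x ∈ H} o(g x)` over all `g ∈ G` gives the inequality of averages.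

Splitting the exponent into coprime factors `P * N` factors both sums into products over the
`P`- and `N`-torsion of `H`, which reduces the abelian case to exponent `p ^ K`. There
`o(y) = 1 + ∑_{k < K} (p ^ (k + 1) - p ^ k) [y ^ p ^ k ≠ 1]`, and a coset `g H` contains at most
as many solutions of `y ^ p ^ k = 1` as `H`, because they form a coset of those in `H` if any.
-/

open Finset

open scoped Classical

section Monoid

variable {M : Type*} [Monoid M]

lemma orderOf_eq_one_add_sum_of_pow_prime_pow_eq_one {p K : ℕ}
    (hp : p.Prime) {y : M} (hy : y ^ p ^ K = 1) :
    orderOf y = 1 + ∑ k ∈ range K, if y ^ p ^ k = 1 then 0 else p ^ (k + 1) - p ^ k := by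
  obtain ⟨j, hjK, hj⟩ := (Nat.dvd_prime_pow hp).1 (orderOf_dvd_of_pow_eq_one hy)
  have hpow : ∀ k, y ^ p ^ k = 1 ↔ j ≤ k := fun k => by
    rw [← orderOf_dvd_iff_pow_eq_one, hj, Nat.pow_dvd_pow_iff_le_right hp.one_lt]
  have hrange : (range K).filter (fun k => ¬ j ≤ k) = range j := by
    ext k; simp only [mem_filter, mem_range]; omega
  simp only [hpow, sum_ite, sum_const_zero, zero_add, hrange]
  rw [sum_range_tsub (fun a b h => Nat.pow_le_pow_right hp.pos h), pow_zero, hj]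
  have := Nat.one_le_pow j p hp.pos
  omega

lemma sum_orderOf_eq_of_pow_prime_pow_eq_one {ι : Type*} {p K : ℕ}
    (hp : p.Prime) (s : Finset ι) (f : ι → M) (hf : ∀ i ∈ s, f i ^ p ^ K = 1) :
    ∑ i ∈ s, orderOf (f i) =
      #s + ∑ k ∈ range K, #{i ∈ s | f i ^ p ^ k ≠ 1} * (p ^ (k + 1) - p ^ k) := by
  rw [sum_congr rfl fun i hi => orderOf_eq_one_add_sum_of_pow_prime_pow_eq_one hp (hf i hi),
    sum_add_distrib, sum_comm, card_eq_sum_ones]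
  simp [sum_ite]

end Monoid

section CommGroup

variable {A : Type*} [CommGroup A]

lemma card_filter_mul_pow_eq_one_le [Fintype A] (H : Subgroup A) (g : A) (n : ℕ) :
    #{x : H | (g * x) ^ n = 1} ≤ #{x : H | (x : A) ^ n = 1} := by
  rcases (univ.filter fun x : H => (g * x) ^ n = 1).eq_empty_or_nonempty with h | ⟨x₀, hx₀⟩
  · simp [h]
  refine card_le_card_of_injOn (fun x => x₀⁻¹ * x) (fun x hx => ?_)
    (fun x _ y _ h => mul_left_cancel h)
  simp only [mem_filter, mem_univ, true_and, mul_pow] at hx₀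
  simp only [coe_filter, mem_univ, true_and, Set.mem_ofPred_eq, mul_pow] at hx ⊢
  rw [Subgroup.coe_mul, Subgroup.coe_inv, mul_pow, inv_pow, mul_left_cancel (hx.trans hx₀.symm),
    inv_mul_cancel]

lemma sum_orderOf_le_sum_orderOf_mul_of_pow_prime_pow_eq_one [Fintype A] {p K : ℕ}
    (hp : p.Prime) (H : Subgroup A) {g : A} (hg : g ^ p ^ K = 1)
    (hH : ∀ x ∈ H, x ^ p ^ K = 1) :
    ∑ x : H, orderOf (x : A) ≤ ∑ x : H, orderOf (g * x) := by
  have hgH : ∀ x : H, (g * x) ^ p ^ K = 1 := fun x => by rw [mul_pow, hg, hH x x.2, one_mul]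
  rw [sum_orderOf_eq_of_pow_prime_pow_eq_one hp univ (fun x : H => (x : A)) fun x _ => hH x x.2,
    sum_orderOf_eq_of_pow_prime_pow_eq_one hp univ (fun x : H => g * x) fun x _ => hgH x]
  refine add_le_add le_rfl (sum_le_sum fun k _ => Nat.mul_le_mul_right _ ?_)
  simp only [ne_eq, filter_not, card_sdiff_of_subset (filter_subset _ _)]
  exact Nat.sub_le_sub_left (card_filter_mul_pow_eq_one_le H g (p ^ k)) _

namespace Subgroup

def torsionBy (H : Subgroup A) (n : ℕ) : Subgroup A where
  carrier := {x | x ∈ H ∧ x ^ n = 1}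
  mul_mem' hx hy := ⟨H.mul_mem hx.1 hy.1, by rw [mul_pow, hx.2, hy.2, one_mul]⟩
  one_mem' := ⟨H.one_mem, one_pow n⟩
  inv_mem' hx := ⟨H.inv_mem hx.1, by rw [inv_pow, hx.2, inv_one]⟩

lemma torsionBy_mul_torsionBy_bijective {P N : ℕ} (hPN : P.Coprime N) {H : Subgroup A}
    (hH : ∀ x ∈ H, x ^ (P * N) = 1) :
    Function.Bijective fun q : H.torsionBy P × H.torsionBy N =>
      (⟨q.1 * q.2, H.mul_mem q.1.2.1 q.2.2.1⟩ : H) := by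
  refine ⟨fun q q' h => ?_, fun x => ?_⟩
  · replace h : (q.1 * q.2 : A) = q'.1 * q'.2 := congrArg Subtype.val h
    have h₁ : (q.1 : A) = q'.1 := by
      rw [← inv_mul_eq_one, ← pow_eq_one_iff_of_coprime hPN]
      have hq : (q.1 : A)⁻¹ * q'.1 = q.2 * (q'.2 : A)⁻¹ := by
        rw [inv_mul_eq_iff_eq_mul, ← mul_assoc, h, mul_inv_cancel_right]
      constructor
      · rw [mul_pow, inv_pow, q.1.2.2, q'.1.2.2, inv_one, one_mul]
      · rw [hq, mul_pow, inv_pow, q.2.2.2, q'.2.2.2, inv_one, one_mul]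
    rw [h₁] at h
    exact Prod.ext (Subtype.ext h₁) (Subtype.ext (mul_left_cancel h))
  · obtain ⟨u, v, huv⟩ := Nat.isCoprime_iff_coprime.2 hPN
    have hx : (x : A) ^ ((P * N : ℕ) : ℤ) = 1 := by rw [zpow_natCast, hH x x.2]
    refine ⟨⟨⟨x ^ (v * N), H.zpow_mem x.2 _, ?_⟩, ⟨x ^ (u * P), H.zpow_mem x.2 _, ?_⟩⟩, ?_⟩
    · rw [← zpow_natCast, ← zpow_mul, show v * N * P = (P * N : ℕ) * v by push_cast; ring,
        zpow_mul, hx, one_zpow]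
    · rw [← zpow_natCast, ← zpow_mul, show u * P * N = (P * N : ℕ) * u by push_cast; ring,
        zpow_mul, hx, one_zpow]
    · ext
      simp only [← zpow_add, show v * N + u * P = 1 by linear_combination huv, zpow_one]

end Subgroup

lemma sum_orderOf_mul_mul_eq_mul_of_coprime [Fintype A] {P N : ℕ} (hPN : P.Coprime N)
    (H : Subgroup A) {a b : A} (ha : a ^ P = 1) (hb : b ^ N = 1)
    (hH : ∀ x ∈ H, x ^ (P * N) = 1) :
    ∑ x : H, orderOf (a * b * x) =
      (∑ y : H.torsionBy P, orderOf (a * y)) * ∑ z : H.torsionBy N, orderOf (b * z) := by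
  rw [sum_mul_sum, ← Fintype.sum_prod_type']
  refine (Fintype.sum_bijective _ (Subgroup.torsionBy_mul_torsionBy_bijective hPN hH) _ _
    fun q => ?_).symm
  have hay : orderOf (a * q.1) ∣ P := orderOf_dvd_of_pow_eq_one (by
    rw [mul_pow, ha, q.1.2.2, one_mul])
  have hbz : orderOf (b * q.2) ∣ N := orderOf_dvd_of_pow_eq_one (by
    rw [mul_pow, hb, q.2.2.2, one_mul])
  rw [← (Commute.all _ _).orderOf_mul_eq_mul_orderOf_of_coprime
    ((hPN.coprime_dvd_left hay).coprime_dvd_right hbz), mul_mul_mul_comm]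

lemma exists_mul_eq_of_pow_mul_eq_one {P N : ℕ} (hPN : P.Coprime N) {g : A}
    (hg : g ^ (P * N) = 1) : ∃ a b : A, a ^ P = 1 ∧ b ^ N = 1 ∧ a * b = g := by
  have hpow : ∀ x ∈ Subgroup.zpowers g, x ^ (P * N) = 1 := by
    rintro _ ⟨k, rfl⟩
    rw [← zpow_natCast, ← zpow_mul, mul_comm, zpow_mul, zpow_natCast, hg, one_zpow]
  obtain ⟨q, hq⟩ :=
    (Subgroup.torsionBy_mul_torsionBy_bijective hPN hpow).2 ⟨g, Subgroup.mem_zpowers g⟩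
  exact ⟨q.1, q.2, q.1.2.2, q.2.2.2, congrArg Subtype.val hq⟩

theorem sum_orderOf_le_sum_orderOf_mul_of_pow_eq_one [Fintype A] {M : ℕ} (hM : M ≠ 0)
    (H : Subgroup A) {g : A} (hg : g ^ M = 1) (hH : ∀ x ∈ H, x ^ M = 1) :
    ∑ x : H, orderOf (x : A) ≤ ∑ x : H, orderOf (g * x) := by
  induction M using Nat.recOnPrimeCoprime generalizing H g with
  | zero => exact absurd rfl hM
  | prime_pow p n hp => exact sum_orderOf_le_sum_orderOf_mul_of_pow_prime_pow_eq_one hp H hg hH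
  | coprime P N hP hN hPN ihP ihN =>
    obtain ⟨a, b, ha, hb, rfl⟩ := exists_mul_eq_of_pow_mul_eq_one hPN hg
    have hsplit := sum_orderOf_mul_mul_eq_mul_of_coprime hPN H (one_pow P) (one_pow N) hH
    simp only [one_mul] at hsplit
    rw [hsplit, sum_orderOf_mul_mul_eq_mul_of_coprime hPN H ha hb hH]
    exact Nat.mul_le_mul (ihP (by omega) _ ha fun x hx => hx.2)
      (ihN (by omega) _ hb fun x hx => hx.2)

end CommGroup

section Group

variable {G : Type*} [Group G] [Fintype G]

open scoped IsMulCommutative in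
theorem sum_orderOf_le_sum_orderOf_mul_of_le_center {H : Subgroup G} (hH : H ≤ Subgroup.center G) (g : G) :
    ∑ x : H, orderOf (x : G) ≤ ∑ x : H, orderOf (g * x) := by
  set K := Subgroup.closure (insert g (H : Set G))
  have : IsMulCommutative K := Subgroup.isMulCommutative_closure <| by
    rintro x (rfl | hx) y (rfl | hy)
    · rfl
    · exact Subgroup.mem_center_iff.1 (hH hy) x
    · exact (Subgroup.mem_center_iff.1 (hH hx) y).symm
    · exact (Subgroup.mem_center_iff.1 (hH hx) y).symm
  have hgK : g ∈ K := Subgroup.subset_closure (Set.mem_insert _ _)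
  have hHK : H ≤ K := fun x hx => Subgroup.subset_closure (Set.mem_insert_of_mem _ hx)
  have hK : ∀ x : K, x ^ Nat.card G = 1 := fun x => Subtype.ext pow_card_eq_one'
  have hle := sum_orderOf_le_sum_orderOf_mul_of_pow_eq_one Nat.card_pos.ne' (H.subgroupOf K)
    (hK ⟨g, hgK⟩) fun x _ => hK x
  let e := (Subgroup.subgroupOfEquivOfLe hHK).toEquiv
  have hsum : ∑ x : H.subgroupOf K, orderOf (x : K) = ∑ x : H, orderOf (x : G) :=
    Fintype.sum_equiv e _ _ fun x => (Subgroup.orderOf_coe _).symm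
  have hsum_mul :
      ∑ x : H.subgroupOf K, orderOf ((⟨g, hgK⟩ : K) * x) = ∑ x : H, orderOf (g * x) :=
    Fintype.sum_equiv e _ _ fun x => (Subgroup.orderOf_coe ((⟨g, hgK⟩ : K) * (x : K))).symm
  rwa [hsum, hsum_mul] at hle

theorem sum_sum_orderOf_mul_eq (H : Subgroup G) :
    ∑ g : G, ∑ x : H, orderOf (g * x) = Nat.card H * ∑ g : G, orderOf g := by
  rw [sum_comm, Nat.card_eq_fintype_card, ← smul_eq_mul, ← card_univ, ← sum_const]
  exact sum_congr rfl fun x _ => Fintype.sum_equiv (Equiv.mulRight (x : G)) _ _ fun _ => rfl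

end Group

open scoped Classical in
/-- **Lemma 2.6.** Let `G` be a finite group and `N` a subgroup of `G`. Then
`o(N ∩ Z(G)) ≤ o(G)`, where `o` denotes the average order and `Z(G)` the center. -/
theorem avg_order_inter_center_le_avg_order
    (G : Type*) [Group G] [Fintype G] (N : Subgroup G) :
    (∑ x : ↥(N ⊓ Subgroup.center G), (orderOf (x : G) : ℝ)) /
        (Nat.card ↥(N ⊓ Subgroup.center G) : ℝ) ≤
      (∑ g : G, (orderOf g : ℝ)) / (Fintype.card G : ℝ) := by
  set H := N ⊓ Subgroup.center G
  have hcount : Fintype.card G * ∑ x : H, orderOf (x : G) ≤ Nat.card H * ∑ g : G, orderOf g :=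
    calc Fintype.card G * ∑ x : H, orderOf (x : G)
        = ∑ _g : G, ∑ x : H, orderOf (x : G) := by rw [sum_const, card_univ, smul_eq_mul]
      _ ≤ ∑ g : G, ∑ x : H, orderOf (g * x) :=
        sum_le_sum fun g _ => sum_orderOf_le_sum_orderOf_mul_of_le_center inf_le_right g
      _ = Nat.card H * ∑ g : G, orderOf g := sum_sum_orderOf_mul_eq H
  rw [div_le_div_iff₀ (Nat.cast_pos.2 Nat.card_pos) (by positivity)]
  exact_mod_cast (mul_comm _ _).trans_le (hcount.trans_eq (mul_comm _ _))
end

section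
/- For every finite group G, o(G) ≥ o(Z(G)), where Z(G) is the center of G. -/
open Finset

open scoped Classical in
/-- Key lemma: if `H ≤ Z(G)` then for any `x : G`,
`∑_{z ∈ H} orderOf z ≤ ∑_{z ∈ H} orderOf (x*z)`. Strong induction on the size of `H`. -/
private lemma key_aux : ∀ (n : ℕ) {G : Type*} [Group G] [Fintype G] (H : Subgroup G),
    H ≤ Subgroup.center G → (H : Set G).toFinset.card ≤ n → ∀ x : G,
    ∑ z ∈ (H : Set G).toFinset, orderOf z ≤ ∑ z ∈ (H : Set G).toFinset, orderOf (x * z) := by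
  intro n
  induction n using Nat.strong_induction_on with
  | _ n IH =>
    intro G _ _ H hH hn x
    classical
    have hcomm : ∀ z ∈ H, ∀ g : G, Commute g z := fun z hz g =>
      Subgroup.mem_center_iff.mp (hH hz) g
    haveI hnormal : H.Normal := by
      constructor
      intro h hh g
      have : g * h * g⁻¹ = h := by rw [hcomm h hh g, mul_inv_cancel_right]
      rwa [this]
    set HF := (H : Set G).toFinset with hHF
    have memHF : ∀ a : G, a ∈ HF ↔ a ∈ H := by
      intro a; simp [hHF, Set.mem_toFinset]
    -- d = order of x modulo H
    set d := orderOf (QuotientGroup.mk x : G ⧸ H) with hd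
    have hdpos : 0 < d := orderOf_pos _
    have hxd : x ^ d ∈ H := by
      rw [← QuotientGroup.eq_one_iff, QuotientGroup.mk_pow]
      exact pow_orderOf_eq_one _
    set w := x ^ d with hw
    -- (B): orderOf (x*z) = d * orderOf (w * z^d) for z ∈ H
    have hB : ∀ z ∈ HF, orderOf (x * z) = d * orderOf (w * z ^ d) := by
      intro z hz
      rw [memHF] at hz
      have hmk : (QuotientGroup.mk (x * z) : G ⧸ H) = QuotientGroup.mk x := by
        rw [QuotientGroup.mk_mul]
        have : (QuotientGroup.mk z : G ⧸ H) = 1 := (QuotientGroup.eq_one_iff z).mpr hz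
        rw [this, mul_one]
      have hdvd : d ∣ orderOf (x * z) := by
        have := orderOf_map_dvd (QuotientGroup.mk' H) (x * z)
        simpa [QuotientGroup.mk'_apply, hmk, ← hd] using this
      have hpow : (x * z) ^ d = w * z ^ d := (hcomm z hz x).mul_pow d
      rw [← hpow, orderOf_pow' _ hdpos.ne', Nat.gcd_eq_right hdvd,
        Nat.mul_div_cancel' hdvd]
    -- (A): orderOf z ≤ d * orderOf (z^d)
    have hA : ∀ z : G, orderOf z ≤ d * orderOf (z ^ d) := by
      intro z
      have h1 : z ^ (d * orderOf (z ^ d)) = 1 := by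
        rw [pow_mul]; exact pow_orderOf_eq_one _
      have h2 : orderOf z ∣ d * orderOf (z ^ d) := orderOf_dvd_of_pow_eq_one h1
      exact Nat.le_of_dvd (Nat.mul_pos hdpos (orderOf_pos _)) h2
    -- The subgroup of d-th powers of H
    set K : Subgroup G :=
      { carrier := (fun a => a ^ d) '' (H : Set G)
        one_mem' := ⟨1, H.one_mem, one_pow d⟩
        mul_mem' := by
          rintro a b ⟨a', ha, rfl⟩ ⟨b', hb, rfl⟩
          exact ⟨a' * b', H.mul_mem ha hb, by
            show (a' * b') ^ d = a' ^ d * b' ^ d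
            exact (hcomm b' hb a').mul_pow d⟩
        inv_mem' := by
          rintro a ⟨a', ha, rfl⟩
          exact ⟨a'⁻¹, H.inv_mem ha, by
            show a'⁻¹ ^ d = (a' ^ d)⁻¹
            exact inv_pow a' d⟩ } with hK
    set KF : Finset G := HF.image (· ^ d) with hKFdef
    have hKF : (K : Set G).toFinset = KF := by
      ext u
      simp only [Set.mem_toFinset, hKFdef, Finset.mem_image]
      constructor
      · rintro ⟨a, ha, rfl⟩; exact ⟨a, (memHF a).mpr ha, rfl⟩
      · rintro ⟨a, ha, rfl⟩; exact ⟨a, (memHF a).mp ha, rfl⟩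
    have hKle : K ≤ H := by
      rintro u ⟨a, ha, rfl⟩
      exact H.pow_mem ha d
    have hKFsub : KF ⊆ HF := by
      intro u hu
      rw [memHF]
      rw [← hKF, Set.mem_toFinset] at hu
      exact hKle hu
    -- fiber counting
    set k := (HF.filter fun z => z ^ d = 1).card with hk
    have hfibcard : ∀ u ∈ KF, (HF.filter fun z => z ^ d = u).card = k := by
      intro u hu
      obtain ⟨z₀, hz₀, rfl⟩ := Finset.mem_image.mp hu
      have hz₀H := (memHF z₀).mp hz₀
      rw [hk]
      apply Finset.card_bij' (fun t _ => z₀⁻¹ * t) (fun t _ => z₀ * t)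
      · intro t ht
        rw [Finset.mem_filter, memHF] at ht ⊢
        obtain ⟨htH, htd⟩ := ht
        refine ⟨H.mul_mem (H.inv_mem hz₀H) htH, ?_⟩
        rw [((hcomm t htH z₀⁻¹)).mul_pow d, htd, inv_pow, inv_mul_cancel]
      · intro t ht
        rw [Finset.mem_filter, memHF] at ht ⊢
        obtain ⟨htH, htd⟩ := ht
        refine ⟨H.mul_mem hz₀H htH, ?_⟩
        rw [((hcomm t htH z₀)).mul_pow d, htd, mul_one]
      · intro t _; rw [mul_inv_cancel_left]
      · intro t _; rw [inv_mul_cancel_left]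
    have fib : ∀ f : G → ℕ, ∑ z ∈ HF, f (z ^ d) = k * ∑ u ∈ KF, f u := by
      intro f
      rw [Finset.sum_comp f (· ^ d), ← hKFdef, Finset.mul_sum]
      refine Finset.sum_congr rfl fun u hu => ?_
      rw [hfibcard u hu, smul_eq_mul]
    -- step (D)
    have hD : ∑ u ∈ KF, orderOf u ≤ ∑ u ∈ KF, orderOf (w * u) := by
      by_cases hcard : KF.card < HF.card
      · have := IH KF.card (lt_of_lt_of_le hcard hn) K (hKle.trans hH)
          (le_of_eq (by rw [hKF])) w
        rwa [hKF] at this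
      · have hEq : KF = HF := Finset.eq_of_subset_of_card_le hKFsub (not_lt.mp hcard)
        rw [hEq]
        have hwH := hxd
        refine le_of_eq (Finset.sum_nbij' (fun u => w * u) (fun u => w⁻¹ * u) ?_ ?_ ?_ ?_ ?_).symm
        · intro a ha; rw [memHF] at ha ⊢; exact H.mul_mem hwH ha
        · intro a ha; rw [memHF] at ha ⊢; exact H.mul_mem (H.inv_mem hwH) ha
        · intro a _; show w⁻¹ * (w * a) = a; rw [inv_mul_cancel_left]
        · intro a _; show w * (w⁻¹ * a) = a; rw [mul_inv_cancel_left]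
        · intro a _; rfl
    calc ∑ z ∈ HF, orderOf z
        ≤ ∑ z ∈ HF, d * orderOf (z ^ d) := Finset.sum_le_sum fun z _ => hA z
      _ = d * ∑ z ∈ HF, orderOf (z ^ d) := by rw [Finset.mul_sum]
      _ = d * (k * ∑ u ∈ KF, orderOf u) := by rw [fib orderOf]
      _ ≤ d * (k * ∑ u ∈ KF, orderOf (w * u)) := by
          exact Nat.mul_le_mul_left d (Nat.mul_le_mul_left k hD)
      _ = d * ∑ z ∈ HF, orderOf (w * z ^ d) := by rw [fib (fun u => orderOf (w * u))]
      _ = ∑ z ∈ HF, d * orderOf (w * z ^ d) := by rw [Finset.mul_sum]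
      _ = ∑ z ∈ HF, orderOf (x * z) := Finset.sum_congr rfl fun z hz => (hB z hz).symm

open scoped Classical in
/-- **Corollary 2.7.** For every finite group `G`, `o(G) ≥ o(Z(G))`, where `o`
denotes the average order and `Z(G)` the center of `G`. -/
theorem avg_order_ge_avg_order_center
    (G : Type*) [Group G] [Fintype G] :
    (∑ g : G, (orderOf g : ℝ)) / (Fintype.card G : ℝ) ≥
      (∑ z : ↥(Subgroup.center G), (orderOf (z : G) : ℝ)) /
        (Nat.card ↥(Subgroup.center G) : ℝ) := by
  classical
  set Z := Subgroup.center G with hZ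
  set ZF := (Z : Set G).toFinset with hZF
  -- natural number sums
  set SG : ℕ := ∑ g : G, orderOf g with hSG
  set SZ : ℕ := ∑ z ∈ ZF, orderOf z with hSZ
  have key : ∀ g : G, SZ ≤ ∑ z ∈ ZF, orderOf (g * z) :=
    fun g => key_aux ZF.card Z le_rfl le_rfl g
  -- sum over all g
  have h1 : Fintype.card G * SZ ≤ ∑ g : G, ∑ z ∈ ZF, orderOf (g * z) := by
    calc Fintype.card G * SZ = ∑ _g : G, SZ := by
          rw [Finset.sum_const, smul_eq_mul, Finset.card_univ]
      _ ≤ ∑ g : G, ∑ z ∈ ZF, orderOf (g * z) := Finset.sum_le_sum fun g _ => key g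
  have h2 : ∑ g : G, ∑ z ∈ ZF, orderOf (g * z) = ZF.card * SG := by
    rw [Finset.sum_comm]
    have : ∀ z : G, ∑ g : G, orderOf (g * z) = SG := by
      intro z
      exact Equiv.sum_comp (Equiv.mulRight z) orderOf
    rw [Finset.sum_congr rfl fun z _ => this z, Finset.sum_const, smul_eq_mul]
  have hmain : Fintype.card G * SZ ≤ ZF.card * SG := le_trans h1 (le_of_eq h2)
  -- translate to reals
  have hmemZF : ∀ a : G, a ∈ ZF ↔ a ∈ Z := by
    intro a; simp [hZF, Set.mem_toFinset]
  have hcardZ : (Nat.card ↥Z : ℝ) = (ZF.card : ℝ) := by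
    congr 1
    rw [Nat.card_eq_fintype_card, ← Finset.card_univ, Finset.card_eq_sum_ones,
      Finset.card_eq_sum_ones]
    exact (Finset.sum_subtype ZF hmemZF fun _ => 1).symm
  have hZsum : (∑ z : ↥Z, (orderOf (z : G) : ℝ)) = (SZ : ℝ) := by
    rw [hSZ]
    push_cast
    exact (Finset.sum_subtype ZF hmemZF fun g => (orderOf g : ℝ)).symm
  have hGsum : (∑ g : G, (orderOf g : ℝ)) = (SG : ℝ) := by
    rw [hSG]; push_cast; rfl
  rw [ge_iff_le, hZsum, hGsum, hcardZ]
  have hm : (0 : ℝ) < ZF.card := by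
    have : (1 : G) ∈ ZF := by rw [hZF, Set.mem_toFinset]; exact Z.one_mem
    exact_mod_cast Finset.card_pos.mpr ⟨1, this⟩
  have hng : (0 : ℝ) < Fintype.card G := by exact_mod_cast Fintype.card_pos
  rw [div_le_div_iff₀ hm hng]
  exact_mod_cast by
    calc SZ * Fintype.card G = Fintype.card G * SZ := Nat.mul_comm _ _
      _ ≤ ZF.card * SG := hmain
      _ = SG * ZF.card := Nat.mul_comm _ _
end
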